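/- arXiv:1202.5960 — 9 statements merged into one kernel-verified Lean document; each statement's English description precedes it below -/
import Mathlib

section
/- Let G be an abelian group and φ, ψ injective commuting endomorphisms of G such that G/φ(G) and G/ψ(G) are both finite. Then the following are equivalent: (a) φ(G) + ψ(G) = G; (b) the inclusion φ(G) → G induces an isomorphism φ(G)/(φ(G) ∩ ψ(G)) ≅ G/ψ(G); (c) φ(G) ∩ ψ(G) = φψ(G). -/
/-!
Since `φ` is injective, it maps the pair `ψ(G) ≤ G` isomorphically onto `φψ(G) ≤ φ(G)`, so
`[φ(G) : φψ(G)] = [G : ψ(G)]`. Splitting both sides along `φψ(G) ≤ φ(G) ∩ ψ(G) ≤ φ(G)` and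
`ψ(G) ≤ φ(G) + ψ(G) ≤ G`, and using `[φ(G) : φ(G) ∩ ψ(G)] = [φ(G) + ψ(G) : ψ(G)]` (finite, as
`G/ψ(G)` is), gives `[φ(G) ∩ ψ(G) : φψ(G)] = [G : φ(G) + ψ(G)]`, whence (a) ⇔ (c). For (a) ⇔ (b),
the map `φ(G) → G/ψ(G)` has kernel `φ(G) ∩ ψ(G)` and is onto exactly when `φ(G) + ψ(G) = G`.
-/

namespace AddMonoidHom

variable {G H K : Type*} [AddGroup G] [AddGroup H] [AddGroup K]

theorem range_comp_le_range (f : G →+ H) (g : H →+ K) : (g.comp f).range ≤ g.range := by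
  rw [← map_range]
  exact AddSubgroup.map_le_range g _

theorem relIndex_range_comp_of_injective {f : H →+ K} (hf : Function.Injective f)
    (g : G →+ H) : (f.comp g).range.relIndex f.range = g.range.index := by
  rw [← map_range, range_eq_map f, AddSubgroup.relIndex_map_map_of_injective _ _ hf,
    AddSubgroup.relIndex_top_right]

end AddMonoidHom

namespace AddSubgroup

variable {G : Type*} [AddCommGroup G]

theorem relIndex_inf_eq_index_sup {A B C : AddSubgroup G} (hC : C ≤ A ⊓ B)
    (hCA : C.relIndex A = B.index) (hB : B.index ≠ 0) :
    C.relIndex (A ⊓ B) = (A ⊔ B).index := by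
  have tower : B.relIndex (A ⊔ B) * (A ⊔ B).index = B.index := relIndex_mul_index le_sup_right
  have chain : C.relIndex (A ⊓ B) * B.relIndex (A ⊔ B) = B.index := by
    rw [relIndex_sup_right, ← inf_relIndex_left A B,
      relIndex_mul_relIndex _ _ _ hC inf_le_left, hCA]
  have hBAB : B.relIndex (A ⊔ B) ≠ 0 := left_ne_zero_of_mul (tower.trans_ne hB)
  exact mul_left_cancel₀ hBAB (by rw [mul_comm, chain, tower])

theorem sup_eq_top_iff_inf_eq {A B C : AddSubgroup G} (hC : C ≤ A ⊓ B)
    (hCA : C.relIndex A = B.index) (hB : B.index ≠ 0) : A ⊔ B = ⊤ ↔ A ⊓ B = C := by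
  rw [← index_eq_one, ← relIndex_inf_eq_index_sup hC hCA hB, relIndex_eq_one]
  exact ⟨fun h => le_antisymm h hC, Eq.le⟩

theorem ker_mk'_comp_subtype (A B : AddSubgroup G) :
    ((QuotientAddGroup.mk' B).comp A.subtype).ker = (A ⊓ B).addSubgroupOf A := by
  rw [← AddMonoidHom.comap_ker, QuotientAddGroup.ker_mk', inf_addSubgroupOf_left, comap_subtype]

theorem mk'_comp_subtype_surjective_iff (A B : AddSubgroup G) :
    Function.Surjective ((QuotientAddGroup.mk' B).comp A.subtype) ↔ A ⊔ B = ⊤ := by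
  rw [← AddMonoidHom.range_eq_top, ← AddMonoidHom.map_range, range_subtype,
    ← comap_injective (QuotientAddGroup.mk'_surjective B) |>.eq_iff, comap_map_eq,
    QuotientAddGroup.ker_mk', comap_top]

theorem sup_eq_top_iff_exists_quotient_addEquiv (A B : AddSubgroup G) :
    A ⊔ B = ⊤ ↔ ∃ e : (A ⧸ (A ⊓ B).addSubgroupOf A) ≃+ (G ⧸ B),
      ∀ x : A, e (QuotientAddGroup.mk x) = QuotientAddGroup.mk (x : G) := by
  rw [← mk'_comp_subtype_surjective_iff]
  constructor
  · intro hsurj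
    exact ⟨(QuotientAddGroup.quotientAddEquivOfEq (ker_mk'_comp_subtype A B).symm).trans
      (QuotientAddGroup.quotientKerEquivOfSurjective _ hsurj), fun _ => rfl⟩
  · rintro ⟨e, he⟩
    have hfactor : ⇑((QuotientAddGroup.mk' B).comp A.subtype) = e ∘ QuotientAddGroup.mk :=
      funext fun x => (he x).symm
    rw [hfactor]
    exact e.surjective.comp QuotientAddGroup.mk_surjective

end AddSubgroup

theorem stmt0_general {G : Type*} [AddCommGroup G] (φ ψ : G →+ G)
    (hφ : Function.Injective φ)
    (hc : φ.comp ψ = ψ.comp φ)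
    (h2 : Finite (G ⧸ ψ.range)) :
    List.TFAE [
      φ.range ⊔ ψ.range = ⊤,
      ∃ e : (φ.range ⧸ ((φ.range ⊓ ψ.range).addSubgroupOf φ.range)) ≃+ (G ⧸ ψ.range),
        ∀ x : φ.range, e (QuotientAddGroup.mk x) = QuotientAddGroup.mk (x : G),
      φ.range ⊓ ψ.range = (φ.comp ψ).range] := by
  have hC : (φ.comp ψ).range ≤ φ.range ⊓ ψ.range :=
    le_inf (ψ.range_comp_le_range φ) (hc ▸ φ.range_comp_le_range ψ)
  tfae_have 1 ↔ 2 := AddSubgroup.sup_eq_top_iff_exists_quotient_addEquiv _ _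
  tfae_have 1 ↔ 3 :=
    AddSubgroup.sup_eq_top_iff_inf_eq hC (AddMonoidHom.relIndex_range_comp_of_injective hφ ψ)
      AddSubgroup.index_ne_zero_of_finite
  tfae_finish

theorem stmt0 {G : Type*} [AddCommGroup G] (φ ψ : G →+ G)
    (hφ : Function.Injective φ) (hψ : Function.Injective ψ)
    (hc : φ.comp ψ = ψ.comp φ)
    (h1 : Finite (G ⧸ φ.range)) (h2 : Finite (G ⧸ ψ.range)) :
    List.TFAE [
      φ.range ⊔ ψ.range = ⊤,
      ∃ e : (φ.range ⧸ ((φ.range ⊓ ψ.range).addSubgroupOf φ.range)) ≃+ (G ⧸ ψ.range),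
        ∀ x : φ.range, e (QuotientAddGroup.mk x) = QuotientAddGroup.mk (x : G),
      φ.range ⊓ ψ.range = (φ.comp ψ).range] :=
  stmt0_general φ ψ hφ hc h2
end

section
/- Let φ, ψ be injective commuting endomorphisms of an abelian group G with finite cokernels. If φ(G) + ψ(G) = G, then φ(G) + ψ²(G) = G, and more generally φᵐ(G) + ψⁿ(G) = G for all m, n ≥ 1. -/
/-!
If `G = φG + ψG` with `φ, ψ` commuting, then applying `φ` gives
`G = φG + ψG = φ(φG + ψG) + ψG = φ²G + φψG + ψG = φ²G + ψG`, since `φψG = ψφG ⊆ ψG`.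
Iterating on both sides yields `G = φᵐG + ψⁿG`.
-/

open AddMonoidHom

theorem AddMonoidHom.range_comp_sup_range_eq_top {A B G : Type*} [AddGroup A] [AddGroup B]
    [AddCommGroup G] {α : A →+ G} {β : B →+ G} {δ : G →+ G}
    (hα : range α ⊔ range β = ⊤) (hδ : range δ ⊔ range β = ⊤)
    (hβ : (range β).map δ ≤ range β) :
    range (δ.comp α) ⊔ range β = ⊤ := by
  symm
  calc ⊤ = range δ ⊔ range β := hδ.symm
    _ = (range α ⊔ range β).map δ ⊔ range β := by rw [hα, ← range_eq_map]
    _ = range (δ.comp α) ⊔ range β := by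
      rw [AddSubgroup.map_sup, map_range, sup_assoc, sup_of_le_right hβ]

namespace AddMonoid.End

variable {G : Type*} [AddCommGroup G]

theorem range_pow_sup_range_eq_top {φ ψ : AddMonoid.End G}
    (h : range φ ⊔ range ψ = ⊤) (hφψ : Commute φ ψ) (m : ℕ) :
    range (φ ^ m) ⊔ range ψ = ⊤ := by
  have hψ : (range ψ).map φ ≤ range ψ :=
    calc (range ψ).map φ = range (φ * ψ) := map_range φ ψ
      _ = range (ψ * φ) := by rw [hφψ.eq]
      _ = (range φ).map ψ := (map_range ψ φ).symm
      _ ≤ range ψ := AddSubgroup.map_le_range ψ _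
  induction m with
  | zero => exact eq_top_iff.2 (le_sup_of_le_left fun x _ => ⟨x, rfl⟩)
  | succ m ih =>
    rw [pow_succ']
    exact range_comp_sup_range_eq_top ih h hψ

theorem range_pow_sup_range_pow_eq_top {φ ψ : AddMonoid.End G}
    (h : range φ ⊔ range ψ = ⊤) (hφψ : Commute φ ψ) (m n : ℕ) :
    range (φ ^ m) ⊔ range (ψ ^ n) = ⊤ := by
  have hm := range_pow_sup_range_eq_top h hφψ m
  rw [sup_comm] at hm ⊢
  exact range_pow_sup_range_eq_top hm (hφψ.pow_left m).symm n

end AddMonoid.End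

theorem stmt1_general {G : Type*} [AddCommGroup G] (φ ψ : AddMonoid.End G)
    (hc : φ * ψ = ψ * φ)
    (hind : AddMonoidHom.range φ ⊔ AddMonoidHom.range ψ = ⊤) :
    (AddMonoidHom.range φ ⊔ AddMonoidHom.range (ψ ^ 2) = ⊤) ∧
      ∀ m n : ℕ, 1 ≤ m → 1 ≤ n →
        AddMonoidHom.range (φ ^ m) ⊔ AddMonoidHom.range (ψ ^ n) = ⊤ := by
  have h := AddMonoid.End.range_pow_sup_range_pow_eq_top hind hc
  refine ⟨?_, fun m n _ _ => h m n⟩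
  rw [← pow_one φ]
  exact h 1 2

theorem stmt1 {G : Type*} [AddCommGroup G] (φ ψ : AddMonoid.End G)
    (hφ : Function.Injective φ) (hψ : Function.Injective ψ)
    (hc : φ * ψ = ψ * φ)
    (h1 : Finite (G ⧸ AddMonoidHom.range φ)) (h2 : Finite (G ⧸ AddMonoidHom.range ψ))
    (hind : AddMonoidHom.range φ ⊔ AddMonoidHom.range ψ = ⊤) :
    (AddMonoidHom.range φ ⊔ AddMonoidHom.range (ψ ^ 2) = ⊤) ∧
      ∀ m n : ℕ, 1 ≤ m → 1 ≤ n →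
        AddMonoidHom.range (φ ^ m) ⊔ AddMonoidHom.range (ψ ^ n) = ⊤ :=
  stmt1_general φ ψ hc hind
end

section
/- Let φ, ψ be injective commuting endomorphisms of an abelian group G with finite cokernels such that φ(G) + ψ(G) = G. Then G/φψ(G) ≅ G/φ(G) ⊕ G/ψ(G) (a Chinese-remainder-type isomorphism). -/
/-- Key lemma: if `G/ψ(G)` is finite, `φψ = ψφ`, and `φ(G) + ψ(G) = G`, then
`(φψ)(G) = φ(G) ∩ ψ(G)`. -/
lemma range_comp_eq_inf {G : Type*} [AddCommGroup G] (φ ψ : G →+ G)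
    (hc : φ.comp ψ = ψ.comp φ)
    (h2 : Finite (G ⧸ ψ.range))
    (hind : φ.range ⊔ ψ.range = ⊤) :
    (φ.comp ψ).range = φ.range ⊓ ψ.range := by
  have hmap : ψ.range ≤ ψ.range.comap φ := by
    rintro x ⟨y, rfl⟩
    exact ⟨φ y, congrFun (congrArg DFunLike.coe hc.symm) y⟩
  set φbar : (G ⧸ ψ.range) →+ (G ⧸ ψ.range) :=
    QuotientAddGroup.map ψ.range ψ.range φ hmap with hφbar
  have hsurj : Function.Surjective φbar := by
    intro q
    obtain ⟨g, rfl⟩ := QuotientAddGroup.mk_surjective q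
    have hg : g ∈ φ.range ⊔ ψ.range := hind ▸ AddSubgroup.mem_top g
    obtain ⟨a, ⟨x, rfl⟩, b, hb, rfl⟩ := AddSubgroup.mem_sup.mp hg
    refine ⟨QuotientAddGroup.mk x, ?_⟩
    show QuotientAddGroup.mk (φ x) = QuotientAddGroup.mk (φ x + b)
    rw [QuotientAddGroup.eq]
    simpa using AddSubgroup.neg_mem _ hb
  have hinj : Function.Injective φbar := Finite.injective_iff_surjective.mpr hsurj
  apply le_antisymm
  · rintro x ⟨y, rfl⟩
    exact ⟨⟨ψ y, rfl⟩, φ y, (congrFun (congrArg DFunLike.coe hc) y).symm⟩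
  · rintro x ⟨⟨a, rfl⟩, hx⟩
    have : φbar (QuotientAddGroup.mk a) = 0 := by
      show QuotientAddGroup.mk (φ a) = (0 : G ⧸ ψ.range)
      rwa [QuotientAddGroup.eq_zero_iff]
    have ha : a ∈ ψ.range := by
      have := hinj (a₂ := 0) (by simpa using this)
      rwa [QuotientAddGroup.eq_zero_iff] at this
    obtain ⟨b, rfl⟩ := ha
    exact ⟨b, rfl⟩

theorem stmt2 {G : Type*} [AddCommGroup G] (φ ψ : G →+ G)
    (hφ : Function.Injective φ) (hψ : Function.Injective ψ)
    (hc : φ.comp ψ = ψ.comp φ)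
    (h1 : Finite (G ⧸ φ.range)) (h2 : Finite (G ⧸ ψ.range))
    (hind : φ.range ⊔ ψ.range = ⊤) :
    ∃ e : (G ⧸ (φ.comp ψ).range) ≃+ (G ⧸ φ.range) × (G ⧸ ψ.range),
      ∀ g : G, e (QuotientAddGroup.mk g) =
        (QuotientAddGroup.mk g, QuotientAddGroup.mk g) := by
  set f : G →+ (G ⧸ φ.range) × (G ⧸ ψ.range) :=
    (QuotientAddGroup.mk' φ.range).prod (QuotientAddGroup.mk' ψ.range) with hf
  have hker : (φ.comp ψ).range = f.ker := by
    rw [range_comp_eq_inf φ ψ hc h2 hind]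
    ext x
    simp [f, AddMonoidHom.mem_ker, Prod.ext_iff, QuotientAddGroup.eq_zero_iff]
  have hfsurj : Function.Surjective f := by
    rintro ⟨qx, qy⟩
    obtain ⟨x, rfl⟩ := QuotientAddGroup.mk_surjective qx
    obtain ⟨y, rfl⟩ := QuotientAddGroup.mk_surjective qy
    have hg : x - y ∈ φ.range ⊔ ψ.range := hind ▸ AddSubgroup.mem_top _
    obtain ⟨a, ha, b, hb, hab⟩ := AddSubgroup.mem_sup.mp hg
    refine ⟨x - a, ?_⟩
    have h1 : (QuotientAddGroup.mk (x - a) : G ⧸ φ.range) = QuotientAddGroup.mk x := by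
      rw [QuotientAddGroup.eq]
      simpa using AddSubgroup.neg_mem _ ha
    have h2 : (QuotientAddGroup.mk (x - a) : G ⧸ ψ.range) = QuotientAddGroup.mk y := by
      rw [QuotientAddGroup.eq]
      have : x - a = y + b := by linear_combination (norm := abel) -hab
      rw [this]; simpa using AddSubgroup.neg_mem _ hb
    exact Prod.ext h1 h2
  refine ⟨(QuotientAddGroup.quotientAddEquivOfEq hker).trans
    (QuotientAddGroup.quotientKerEquivOfSurjective f hfsurj), fun g => ?_⟩
  rfl
end

section
/- Let φ, ψ be injective commuting endomorphisms of an abelian group G with finite cokernels. If φ(G) ∩ ψ(G) = φψ(G), then φ(G) + ψ(G) = G. -/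
/-!
Since `φ` is injective, `φ` maps `G ⧸ ψ(G)` isomorphically onto `φ(G) ⧸ φψ(G)`, and by the
hypothesis the latter is `φ(G) ⧸ (φ(G) ∩ ψ(G)) ≅ (φ(G) + ψ(G)) ⧸ ψ(G)`. So `ψ(G)` has the same
finite index in `φ(G) + ψ(G)` as in `G`, which forces `φ(G) + ψ(G) = G`.
-/

namespace Subgroup

variable {G G' : Type*} [Group G] [Group G']

@[to_additive]
theorem eq_top_of_relIndex_eq_index {H K : Subgroup G} (hHK : H ≤ K) (hH : H.index ≠ 0)
    (hrel : H.relIndex K = H.index) : K = ⊤ := by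
  have hmul := relIndex_mul_index hHK
  rw [hrel] at hmul
  exact index_eq_one.mp (Nat.eq_of_mul_eq_mul_left (Nat.pos_of_ne_zero hH) (by simpa using hmul))

@[to_additive]
theorem relIndex_range_sup_eq_index {f : G' →* G} (hf : Function.Injective f) (K : Subgroup G')
    (L : Subgroup G) [L.Normal] (hKL : f.range ⊓ L = K.map f) :
    L.relIndex (f.range ⊔ L) = K.index := by
  rw [relIndex_sup_right, ← inf_relIndex_left, hKL, f.range_eq_map,
    relIndex_map_map_of_injective _ _ hf, relIndex_top_right]

end Subgroup

theorem stmt3_general {G : Type*} [AddCommGroup G] (φ ψ : G →+ G)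
    (hφ : Function.Injective φ)
    (h2 : Finite (G ⧸ ψ.range))
    (h : φ.range ⊓ ψ.range = (φ.comp ψ).range) :
    φ.range ⊔ ψ.range = ⊤ := by
  rw [AddMonoidHom.range_comp] at h
  exact AddSubgroup.eq_top_of_relIndex_eq_index le_sup_right ψ.range.index_ne_zero_of_finite
    (ψ.range.relIndex_range_sup_eq_index hφ ψ.range h)

theorem stmt3 {G : Type*} [AddCommGroup G] (φ ψ : G →+ G)
    (hφ : Function.Injective φ) (hψ : Function.Injective ψ)
    (hc : φ.comp ψ = ψ.comp φ)
    (h1 : Finite (G ⧸ φ.range)) (h2 : Finite (G ⧸ ψ.range))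
    (h : φ.range ⊓ ψ.range = (φ.comp ψ).range) :
    φ.range ⊔ ψ.range = ⊤ :=
  stmt3_general φ ψ hφ h2 h
end

section
/- Let v and w be isometries in a unital C*-algebra (i.e. v*v = 1 and w*w = 1). If v w* = w* v, then v w = w v. -/
theorem stmt4 {A : Type*} [NormedRing A] [StarRing A] [CStarRing A]
    [NormedAlgebra ℂ A] [CompleteSpace A] [StarModule ℂ A]
    (v w : A) (hv : star v * v = 1) (hw : star w * w = 1)
    (h : v * star w = star w * v) : v * w = w * v := by
  have h2 : star v * w = w * star v := by
    have := congrArg star h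
    simpa [star_mul, mul_assoc] using this.symm
  have key : star (v * w - w * v) * (v * w - w * v) = 0 := by
    have t1 : star w * star v * (v * w) = 1 := by
      rw [mul_assoc (star w), ← mul_assoc (star v), hv, one_mul, hw]
    have t2 : star w * star v * (w * v) = 1 := by
      rw [mul_assoc (star w), ← mul_assoc (star v), h2, mul_assoc w, hv, mul_one, hw]
    have t3 : star v * star w * (v * w) = 1 := by
      rw [mul_assoc (star v), ← mul_assoc (star w), ← h, mul_assoc v, hw, mul_one, hv]
    have t4 : star v * star w * (w * v) = 1 := by
      rw [mul_assoc (star v), ← mul_assoc (star w), hw, one_mul, hv]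
    simp only [star_sub, star_mul, sub_mul, mul_sub, t1, t2, t3, t4]
    abel
  have := CStarRing.star_mul_self_eq_zero_iff (v * w - w * v) |>.mp key
  linear_combination (norm := noncomm_ring) this
end

section
/- Let φ and ψ be injective commuting endomorphisms of a countable abelian group G, and let s_φ, s_ψ be the isometries on ℓ²(G) defined on basis vectors by s_φ(ξ_g) = ξ_{φ(g)} and s_ψ(ξ_g) = ξ_{ψ(g)}. Then s_φ* s_ψ = s_ψ s_φ* if and only if φ(G) ∩ ψ(G) = φψ(G). -/
/-!
On basis vectors `s_φ* ξ_h` is `ξ_k` when `h = φ k` and `0` when `h ∉ φ(G)`. Hence, `φ` and `ψ`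
commuting, `s_φ* s_ψ` and `s_ψ s_φ*` always agree on `ξ_g` for `g ∈ φ(G)`, while for `g ∉ φ(G)` they
agree iff `ψ g ∉ φ(G)`. So the operators commute iff `ψ g ∈ φ(G)` forces `g ∈ φ(G)`, and for
injective `ψ` this says exactly that every `ψ g = φ k` is of the form `φ (ψ m)`.
-/

open Set Function ContinuousLinearMap

theorem Set.range_inter_range_eq_range_comp_iff {ι : Type*} {f g : ι → ι} (hg : Injective g)
    (hfg : f ∘ g = g ∘ f) :
    range f ∩ range g = range (f ∘ g) ↔ ∀ i, g i ∈ range f → i ∈ range f := by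
  constructor
  · intro h i hi
    obtain ⟨j, hj⟩ : g i ∈ range (f ∘ g) := h ▸ ⟨hi, mem_range_self i⟩
    rw [hfg] at hj
    exact ⟨j, hg hj⟩
  · intro h
    refine Subset.antisymm ?_ ?_
    · rintro _ ⟨hx, i, rfl⟩
      obtain ⟨j, rfl⟩ := h i hx
      exact ⟨j, congrFun hfg j⟩
    · rintro _ ⟨j, rfl⟩
      exact ⟨mem_range_self _, f j, (congrFun hfg j).symm⟩

namespace lp

variable {𝕜 ι κ : Type*} [RCLike 𝕜] [DecidableEq ι] [DecidableEq κ]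

theorem ext_single_one {F : Type*} {p : ENNReal} [Fact (1 ≤ p)] [AddCommMonoid F] [Module 𝕜 F]
    [TopologicalSpace F] [T2Space F] (hp : p ≠ ⊤) ⦃A B : lp (fun _ : ι => 𝕜) p →L[𝕜] F⦄
    (h : ∀ i, A (lp.single p i 1) = B (lp.single p i 1)) : A = B :=
  lp.ext_continuousLinearMap hp fun i => ContinuousLinearMap.ext_ring (h i)

theorem single_one_ne_zero (p : ENNReal) (i : ι) :
    lp.single (E := fun _ : ι => 𝕜) p i (1 : 𝕜) ≠ 0 :=
  fun h => one_ne_zero (α := 𝕜) (by simpa using congrArg (fun x : lp (fun _ : ι => 𝕜) p => x i) h)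

section Adjoint

variable {f : ι → κ} {S : lp (fun _ : ι => 𝕜) 2 →L[𝕜] lp (fun _ : κ => 𝕜) 2}

theorem adjoint_single_apply (hS : ∀ i, S (lp.single 2 i 1) = lp.single 2 (f i) 1)
    (k : κ) (i : ι) :
    adjoint S (lp.single 2 k 1) i = lp.single (E := fun _ : κ => 𝕜) 2 k 1 (f i) := by
  have h := lp.inner_single_left (𝕜 := 𝕜) i (1 : 𝕜) (adjoint S (lp.single 2 k 1))
  rw [adjoint_inner_right, hS, lp.inner_single_left] at h
  simpa using h.symm

theorem adjoint_single_apply_self (hf : Injective f)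
    (hS : ∀ i, S (lp.single 2 i 1) = lp.single 2 (f i) 1) (i : ι) :
    adjoint S (lp.single 2 (f i) 1) = lp.single 2 i 1 := by
  ext j
  simp [adjoint_single_apply hS, lp.single_apply, Pi.single_apply, hf.eq_iff]

theorem adjoint_single_eq_zero_iff (hf : Injective f)
    (hS : ∀ i, S (lp.single 2 i 1) = lp.single 2 (f i) 1) (k : κ) :
    adjoint S (lp.single 2 k 1) = 0 ↔ k ∉ range f := by
  constructor
  · rintro h ⟨i, rfl⟩
    exact single_one_ne_zero 2 i (adjoint_single_apply_self hf hS i ▸ h)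
  · intro hk
    ext i
    have hik : f i ≠ k := fun h => hk ⟨i, h⟩
    simp [adjoint_single_apply hS, lp.single_apply, hik]

end Adjoint

variable {f g : ι → ι} {S T : lp (fun _ : ι => 𝕜) 2 →L[𝕜] lp (fun _ : ι => 𝕜) 2}

theorem adjoint_comp_apply_single_eq_iff (hf : Injective f) (hfg : f ∘ g = g ∘ f)
    (hS : ∀ i, S (lp.single 2 i 1) = lp.single 2 (f i) 1)
    (hT : ∀ i, T (lp.single 2 i 1) = lp.single 2 (g i) 1) (i : ι) :
    (adjoint S ∘L T) (lp.single 2 i 1) = (T ∘L adjoint S) (lp.single 2 i 1) ↔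
      (g i ∈ range f → i ∈ range f) := by
  rw [ContinuousLinearMap.comp_apply, ContinuousLinearMap.comp_apply, hT]
  by_cases hi : i ∈ range f
  · obtain ⟨j, rfl⟩ := hi
    refine iff_of_true ?_ fun _ => mem_range_self j
    rw [← Function.comp_apply (f := g), ← hfg, Function.comp_apply,
      adjoint_single_apply_self hf hS, adjoint_single_apply_self hf hS, hT]
  · rw [(adjoint_single_eq_zero_iff hf hS i).2 hi, map_zero, adjoint_single_eq_zero_iff hf hS]
    exact (imp_iff_not hi).symm

theorem adjoint_comp_comm_iff_range_inter_range (hf : Injective f) (hg : Injective g)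
    (hfg : f ∘ g = g ∘ f) (hS : ∀ i, S (lp.single 2 i 1) = lp.single 2 (f i) 1)
    (hT : ∀ i, T (lp.single 2 i 1) = lp.single 2 (g i) 1) :
    adjoint S ∘L T = T ∘L adjoint S ↔ range f ∩ range g = range (f ∘ g) := by
  rw [range_inter_range_eq_range_comp_iff hg hfg,
    ← forall_congr' (adjoint_comp_apply_single_eq_iff hf hfg hS hT)]
  exact ⟨fun h i => by rw [h], fun h => ext_single_one ENNReal.ofNat_ne_top h⟩

end lp

theorem stmt7_general {G : Type*} [AddCommGroup G] [DecidableEq G]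
    (φ ψ : G →+ G) (hφ : Function.Injective φ) (hψ : Function.Injective ψ)
    (hc : φ.comp ψ = ψ.comp φ)
    (S T : lp (fun _ : G => ℂ) 2 →L[ℂ] lp (fun _ : G => ℂ) 2)
    (hS : ∀ g : G, S (lp.single 2 g 1) = lp.single 2 (φ g) 1)
    (hT : ∀ g : G, T (lp.single 2 g 1) = lp.single 2 (ψ g) 1) :
    (ContinuousLinearMap.adjoint S) ∘L T = T ∘L (ContinuousLinearMap.adjoint S)
      ↔ φ.range ⊓ ψ.range = (φ.comp ψ).range := by
  rw [← SetLike.coe_set_eq (p := φ.range ⊓ ψ.range), AddSubgroup.coe_inf, AddMonoidHom.coe_range,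
    AddMonoidHom.coe_range, AddMonoidHom.coe_range, AddMonoidHom.coe_comp]
  exact lp.adjoint_comp_comm_iff_range_inter_range hφ hψ (congrArg DFunLike.coe hc) hS hT

theorem stmt7 {G : Type*} [AddCommGroup G] [Countable G] [DecidableEq G]
    (φ ψ : G →+ G) (hφ : Function.Injective φ) (hψ : Function.Injective ψ)
    (hc : φ.comp ψ = ψ.comp φ)
    (S T : lp (fun _ : G => ℂ) 2 →L[ℂ] lp (fun _ : G => ℂ) 2)
    (hS : ∀ g : G, S (lp.single 2 g 1) = lp.single 2 (φ g) 1)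
    (hT : ∀ g : G, T (lp.single 2 g 1) = lp.single 2 (ψ g) 1) :
    (ContinuousLinearMap.adjoint S) ∘L T = T ∘L (ContinuousLinearMap.adjoint S)
      ↔ φ.range ⊓ ψ.range = (φ.comp ψ).range :=
  stmt7_general φ ψ hφ hψ hc S T hS hT
end

section
/- Let α and β be commuting surjective endomorphisms of an abelian group H with finite kernels. Then ker(α) ∩ ker(β) = {1} if and only if the subgroup generated by ker(α) and ker(β) equals ker(α ∘ β). -/
/-!
Count orders. Since `β` is surjective,
`ker (α ∘ β) = β⁻¹(ker α)` has order `|ker α| · |ker β|`, while the product formula gives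
`|ker α ⊔ ker β| · |ker α ⊓ ker β| = |ker α| · |ker β|`. As `ker α ⊔ ker β ≤ ker (α ∘ β)`
(this is where commutativity of `α` and `β` enters), the two subgroups coincide exactly when
the intersection is trivial.
-/

namespace Subgroup

variable {G : Type*} [Group G]

theorem card_sup_mul_card_inf (H K : Subgroup G) [K.Normal] :
    Nat.card ↥(H ⊔ K) * Nat.card ↥(H ⊓ K) = Nat.card H * Nat.card K := by
  have hsup : Nat.card K * K.relIndex H = Nat.card ↥(H ⊔ K) := by
    rw [← relIndex_sup_right, ← relIndex_bot_left, ← relIndex_bot_left,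
      relIndex_mul_relIndex ⊥ K (H ⊔ K) bot_le le_sup_right]
  have hH : Nat.card ↥(K ⊓ H) * K.relIndex H = Nat.card H := by
    rw [← inf_relIndex_right, ← relIndex_bot_left, ← relIndex_bot_left,
      relIndex_mul_relIndex ⊥ (K ⊓ H) H bot_le inf_le_right]
  rw [← hsup, ← hH, inf_comm]
  ring

theorem card_comap_of_surjective {N : Type*} [Group N] {f : G →* N}
    (hf : Function.Surjective f) (K : Subgroup N) :
    Nat.card (K.comap f) = Nat.card f.ker * Nat.card K := by
  rw [← relIndex_bot_left, ← relIndex_bot_left,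
    ← relIndex_mul_relIndex ⊥ f.ker (K.comap f) bot_le (f.ker_le_comap K), relIndex_ker,
    map_comap_eq_self_of_surjective hf]

end Subgroup

namespace MonoidHom

variable {G : Type*} [Group G]

theorem card_ker_comp_of_surjective {N P : Type*} [Group N] [Group P] (α : N →* P)
    {β : G →* N} (hβ : Function.Surjective β) :
    Nat.card (α.comp β).ker = Nat.card β.ker * Nat.card α.ker := by
  rw [← comap_ker, Subgroup.card_comap_of_surjective hβ]

theorem ker_sup_ker_le_ker_comp {α β : G →* G} (hc : α.comp β = β.comp α) :
    α.ker ⊔ β.ker ≤ (α.comp β).ker := by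
  refine sup_le ?_ (β.ker_le_comap α.ker)
  rw [hc]
  exact α.ker_le_comap β.ker

end MonoidHom

theorem stmt10_general {H : Type*} [CommGroup H] (α β : H →* H)
    (hβ : Function.Surjective β)
    (hkα : Finite α.ker) (hkβ : Finite β.ker)
    (hc : α.comp β = β.comp α) :
    α.ker ⊓ β.ker = ⊥ ↔ α.ker ⊔ β.ker = (α.comp β).ker := by
  have hprod := Subgroup.card_sup_mul_card_inf α.ker β.ker
  have hcomp : Nat.card (α.comp β).ker = Nat.card α.ker * Nat.card β.ker := by
    rw [α.card_ker_comp_of_surjective hβ, mul_comm]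
  have hpos : 0 < Nat.card α.ker * Nat.card β.ker := mul_pos Nat.card_pos Nat.card_pos
  have : Finite (α.comp β).ker := Nat.finite_of_card_ne_zero (hcomp ▸ hpos.ne')
  rw [← Subgroup.card_eq_one]
  constructor
  · intro hinf
    refine Subgroup.eq_of_le_of_card_ge (MonoidHom.ker_sup_ker_le_ker_comp hc) ?_
    rw [hcomp, ← hprod, hinf, mul_one]
  · intro hsup
    rw [hsup, hcomp] at hprod
    exact Nat.eq_of_mul_eq_mul_left hpos (by rw [hprod, mul_one])

theorem stmt10 {H : Type*} [CommGroup H] (α β : H →* H)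
    (hα : Function.Surjective α) (hβ : Function.Surjective β)
    (hkα : Finite α.ker) (hkβ : Finite β.ker)
    (hc : α.comp β = β.comp α) :
    α.ker ⊓ β.ker = ⊥ ↔ α.ker ⊔ β.ker = (α.comp β).ker :=
  stmt10_general α β hβ hkα hkβ hc
end

section
/- Let α, β be commuting independent surjective endomorphisms of an abelian group H with finite kernels (ker αᵐ ∩ ker βⁿ = {1} for all m, n). Then the orbit of x under the semigroup generated by α and β satisfies orb_{α,β}(x) = ⋃_{y ∈ orb_α(x)} orb_β(y), where orb_{α,β}(x) = {y : ∃ n,m,s,t ∈ ℕ, αⁿβˢ(y) = αᵐβᵗ(x)}. -/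
/-!
Commutation gives `⊇` at once. For `⊆`, let `αⁿβˢy = αᵐβᵗx` and use surjectivity to pick `z` with
`αⁿz = αᵐx`; then `βˢy (βᵗz)⁻¹` lies in the finite group `ker αⁿ`. Since `β` commutes with `α` and
`ker αⁿ ∩ ker βᵗ` is trivial, `βᵗ` is an injective, hence bijective, self-map of `ker αⁿ`, so
`βˢy (βᵗz)⁻¹ = βᵗw` with `w ∈ ker αⁿ`. Then `zw ∈ orb_α(x)` and `βˢy = βᵗ(zw)`.
-/

open Function Set

namespace MonoidHom

variable {G : Type*} [Group G]

theorem finite_ker_comp {N P : Type*} [Group N] [Group P] {f : N →* P} {g : G →* N}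
    (hf : (f.ker : Set N).Finite) (hg : (g.ker : Set G).Finite) :
    ((f.comp g).ker : Set G).Finite := by
  rw [← comap_ker, Subgroup.coe_comap]
  refine hf.preimage' fun b _ => ?_
  by_cases hb : ∃ a, g a = b
  · obtain ⟨a, rfl⟩ := hb
    refine (hg.image (a * ·)).subset fun y hy => ⟨a⁻¹ * y, ?_, mul_inv_cancel_left a y⟩
    show g (a⁻¹ * y) = 1
    rw [map_mul, map_inv, show g y = g a from hy, inv_mul_cancel]
  · exact finite_empty.subset fun y hy => hb ⟨y, hy⟩

theorem finite_ker_pow {f : Monoid.End G} (hf : (f.ker : Set G).Finite) (n : ℕ) :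
    ((f ^ n).ker : Set G).Finite := by
  induction n with
  | zero => exact (finite_singleton 1).subset fun y hy => hy
  | succ n ih => rw [pow_succ]; exact finite_ker_comp ih hf

theorem surjOn_ker_of_commute {f g : Monoid.End G} (hfg : Commute f g)
    (hf : (f.ker : Set G).Finite) (hfg_ker : f.ker ⊓ g.ker = ⊥) :
    SurjOn g f.ker f.ker := by
  have hmaps : MapsTo g f.ker f.ker := fun a (ha : f a = 1) => show f (g a) = 1 by
    rw [show f (g a) = g (f a) from DFunLike.congr_fun hfg.eq a, ha, map_one]
  have hinj : InjOn g f.ker := (injOn_iff_map_eq_one g f.ker).mpr fun a ha hga => by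
    rw [← Subgroup.mem_bot, ← hfg_ker]
    exact ⟨ha, hga⟩
  exact ((hf.injOn_iff_bijOn_of_mapsTo hmaps).mp hinj).surjOn

end MonoidHom

theorem stmt16_general {H : Type*} [CommGroup H] (α β : Monoid.End H)
    (hα : Function.Surjective α)
    (hkα : Finite (MonoidHom.ker α))
    (hc : α * β = β * α)
    (hind : ∀ m n : ℕ, MonoidHom.ker (α ^ m) ⊓ MonoidHom.ker (β ^ n) = ⊥)
    (x : H) :
    {y : H | ∃ n m s t : ℕ, (α ^ n) ((β ^ s) y) = (α ^ m) ((β ^ t) x)} =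
      ⋃ y ∈ {y : H | ∃ n m : ℕ, (α ^ n) y = (α ^ m) x},
        {w : H | ∃ s t : ℕ, (β ^ s) w = (β ^ t) y} := by
  have hcomm (n t : ℕ) (z : H) : (α ^ n) ((β ^ t) z) = (β ^ t) ((α ^ n) z) :=
    DFunLike.congr_fun ((Commute.pow_pow hc n t).eq) z
  ext y
  simp only [mem_ofPred_eq, mem_iUnion, exists_prop]
  constructor
  · rintro ⟨n, m, s, t, h⟩
    obtain ⟨z, hz⟩ := (Monoid.End.coe_pow H α n ▸ hα.iterate n) ((α ^ m) x)
    have hk : (α ^ n) ((β ^ s) y * ((β ^ t) z)⁻¹) = 1 := by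
      rw [map_mul, map_inv, h, hcomm m, hcomm n, hz, mul_inv_cancel]
    obtain ⟨w, hw, hβw⟩ := MonoidHom.surjOn_ker_of_commute (Commute.pow_pow hc n t)
      (MonoidHom.finite_ker_pow (Set.finite_coe_iff.mp hkα) n) (hind n t) hk
    replace hw : (α ^ n) w = 1 := hw
    refine ⟨z * w, ⟨n, m, by rw [map_mul, hz, hw, mul_one]⟩, s, t, ?_⟩
    rw [map_mul, hβw, mul_comm, inv_mul_cancel_right]
  · rintro ⟨z, ⟨n, m, hz⟩, s, t, hw⟩
    exact ⟨n, m, s, t, by rw [hw, hcomm, hz, hcomm]⟩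

theorem stmt16 {H : Type*} [CommGroup H] (α β : Monoid.End H)
    (hα : Function.Surjective α) (hβ : Function.Surjective β)
    (hkα : Finite (MonoidHom.ker α)) (hkβ : Finite (MonoidHom.ker β))
    (hc : α * β = β * α)
    (hind : ∀ m n : ℕ, MonoidHom.ker (α ^ m) ⊓ MonoidHom.ker (β ^ n) = ⊥)
    (x : H) :
    {y : H | ∃ n m s t : ℕ, (α ^ n) ((β ^ s) y) = (α ^ m) ((β ^ t) x)} =
      ⋃ y ∈ {y : H | ∃ n m : ℕ, (α ^ n) y = (α ^ m) x},
        {w : H | ∃ s t : ℕ, (β ^ s) w = (β ^ t) y} :=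
  stmt16_general α β hα hkα hc hind x
end

section
/- Let φ be an endomorphism of ℤⁿ given by an integer matrix T with det T ≠ 0, and let Λφ denote the induced endomorphism of the exterior algebra Λ*(ℤⁿ). There exists a unique endomorphism b of Λ*(ℤⁿ) satisfying b ∘ Λφ = |det T| · id, and if φ = k·id then b restricted to Λᵖ(ℤⁿ) is multiplication by k^{n-p}. -/
/-!
By the Smith normal form, `φ` maps some basis `(cᵢ)` of `ℤⁿ` to `(aᵢ • dᵢ)` for another basis
`(dᵢ)`, with `|∏ aᵢ| = |det T|`. Hence `Λφ` maps the basis vector `c_S` of `Λ*(ℤⁿ)` to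
`(∏_{i ∈ S} aᵢ) • d_S`, and sending `d_S` to `± (∏_{i ∉ S} aᵢ) • c_S` defines `b` with
`b ∘ Λφ = Λφ ∘ b = |det T| • id`. The second identity makes `b` unique: if `b' ∘ Λφ = |det T| • id`
then `|det T| • b' = b' ∘ Λφ ∘ b = |det T| • b`, and `Λ*(ℤⁿ)` is free, so torsion-free.
For `φ = k • id`, `Λφ` is multiplication by `kᵖ` on `Λᵖ(ℤⁿ)`, and cancelling `kᵖ` in
`kᵖ • b(x) = kⁿ • x` gives `b(x) = k^(n-p) • x`.
-/

open ExteriorAlgebra Module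

namespace LinearMap

theorem existsUnique_comp_eq_smul_id {R N : Type*} [CommSemiring R] [AddCommMonoid N]
    [Module R N] {f g : N →ₗ[R] N} {c : R} (hgf : g ∘ₗ f = c • id) (hfg : f ∘ₗ g = c • id)
    (hc : IsSMulRegular N c) : ∃! h : N →ₗ[R] N, h ∘ₗ f = c • id := by
  refine ⟨g, hgf, fun h hhf => ext fun x => hc ?_⟩
  calc c • h x = h (f (g x)) := by rw [← comp_apply f g, hfg, ← map_smul]; rfl
    _ = c • g x := LinearMap.congr_fun hhf (g x)

variable {R M ι : Type*} [CommRing R] [AddCommGroup M] [Module R M]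

theorem exists_basis_apply_eq_smul_basis [IsDomain R] [IsPrincipalIdealRing R] [Finite ι]
    (b : Basis ι R M) {f : M →ₗ[R] M} (hf : Function.Injective f) :
    ∃ (c d : Basis ι R M) (a : ι → R), ∀ i, f (c i) = a i • d i := by
  have : Module.Finite R M := .of_basis b
  have : Module.Free R M := .of_basis b
  obtain ⟨d, a, e, he⟩ :=
    Submodule.exists_smith_normal_form_of_rank_eq b (finrank_range_of_inj hf)
  refine ⟨e.map (LinearEquiv.ofInjective f hf).symm, d, a, fun i => ?_⟩
  rw [Basis.map_apply, ← he i]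
  exact congrArg Subtype.val ((LinearEquiv.ofInjective f hf).apply_symm_apply (e i))

theorem associated_det_prod_of_apply_eq_smul [Fintype ι] {c d : Basis ι R M} {f : M →ₗ[R] M}
    {a : ι → R} (h : ∀ i, f (c i) = a i • d i) : Associated (LinearMap.det f) (∏ i, a i) := by
  classical
  let e := d.equiv c (Equiv.refl ι)
  have hdiag : toMatrix c c (e.toLinearMap ∘ₗ f) = Matrix.diagonal a := by
    ext i j
    rcases eq_or_ne i j with rfl | hij
    · simp [toMatrix_apply, h, e]
    · simp [toMatrix_apply, h, e, hij]
  have hdet : LinearMap.det e.toLinearMap * LinearMap.det f = ∏ i, a i := by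
    rw [← det_comp, ← det_toMatrix c, hdiag, Matrix.det_diagonal]
  exact ⟨(LinearEquiv.isUnit_det' e).unit, by rw [mul_comm, ← hdet]; rfl⟩

end LinearMap

namespace ExteriorAlgebra

variable {R M M' ι : Type*} [CommRing R] [AddCommGroup M] [Module R M] [AddCommGroup M']
  [Module R M']

theorem map_ιMulti_of_apply_eq_smul {f : M →ₗ[R] M'} {v : ι → M} {w : ι → M'} {a : ι → R}
    (h : ∀ i, f (v i) = a i • w i) {n : ℕ} (e : Fin n → ι) :
    map f (ιMulti R n (v ∘ e)) = (∏ j, a (e j)) • ιMulti R n (w ∘ e) := by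
  rw [map_apply_ιMulti, ← AlternatingMap.map_smul_univ]
  exact congrArg _ (funext fun j => h (e j))

theorem map_basis_of_apply_eq_smul [LinearOrder ι] {c : Basis ι R M} {d : Basis ι R M'}
    {f : M →ₗ[R] M'} {a : ι → R} (h : ∀ i, f (c i) = a i • d i) (s : Finset ι) :
    map f (c.ExteriorAlgebra s) = (∏ i ∈ s, a i) • d.ExteriorAlgebra s := by
  rw [basis_apply_ofCard c rfl, basis_apply_ofCard d rfl, ιMulti_family, ιMulti_family,
    map_ιMulti_of_apply_eq_smul h, ← s.prod_coe_sort]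
  congr 1
  exact Fintype.prod_equiv (s.orderIsoOfFin rfl).toEquiv _ _ fun _ => rfl

theorem exists_comp_map_eq_smul_id_of_apply_eq_smul [LinearOrder ι] [Fintype ι]
    {c : Basis ι R M} {d : Basis ι R M'} {f : M →ₗ[R] M'} {a : ι → R}
    (h : ∀ i, f (c i) = a i • d i) :
    ∃ g : ExteriorAlgebra R M' →ₗ[R] ExteriorAlgebra R M,
      g ∘ₗ (map f).toLinearMap = (∏ i, a i) • LinearMap.id ∧
        (map f).toLinearMap ∘ₗ g = (∏ i, a i) • LinearMap.id := by
  classical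
  refine ⟨d.ExteriorAlgebra.constr R fun s => (∏ i ∈ sᶜ, a i) • c.ExteriorAlgebra s,
    c.ExteriorAlgebra.ext fun s => ?_, d.ExteriorAlgebra.ext fun s => ?_⟩ <;>
  simp [map_basis_of_apply_eq_smul h, smul_smul, mul_comm, Finset.prod_mul_prod_compl]

theorem map_smul_id_ιMulti (k : R) {p : ℕ} (x : Fin p → M) :
    map (k • LinearMap.id) (ιMulti R p x) = k ^ p • ιMulti R p x := by
  rw [map_apply_ιMulti]
  exact ((ιMulti R p).map_smul_univ (fun _ => k) x).trans (by simp)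

theorem apply_ιMulti_of_comp_map_smul_id {k : R} (hk : IsSMulRegular (ExteriorAlgebra R M) k)
    {n : ℕ} {b : ExteriorAlgebra R M →ₗ[R] ExteriorAlgebra R M}
    (hb : b ∘ₗ (map (k • LinearMap.id)).toLinearMap = k ^ n • LinearMap.id) {p : ℕ} (hp : p ≤ n)
    (x : Fin p → M) : b (ιMulti R p x) = k ^ (n - p) • ιMulti R p x := by
  refine hk.pow p ?_
  calc k ^ p • b (ιMulti R p x) = b (map (k • LinearMap.id) (ιMulti R p x)) := by
        rw [map_smul_id_ιMulti, map_smul]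
    _ = k ^ n • ιMulti R p x := LinearMap.congr_fun hb _
    _ = k ^ p • k ^ (n - p) • ιMulti R p x := by
        rw [smul_smul, ← pow_add, Nat.add_sub_cancel' hp]

end ExteriorAlgebra

theorem LinearMap.exists_comp_exteriorAlgebra_map_eq_smul_id {R M : Type*} [CommRing R]
    [IsDomain R] [IsPrincipalIdealRing R] [AddCommGroup M] [Module R M] [Module.Free R M]
    [Module.Finite R M] {f : M →ₗ[R] M} (hf : Function.Injective f) {r : R}
    (hr : Associated (LinearMap.det f) r) :
    ∃ g : ExteriorAlgebra R M →ₗ[R] ExteriorAlgebra R M,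
      g ∘ₗ (map f).toLinearMap = r • LinearMap.id ∧
        (map f).toLinearMap ∘ₗ g = r • LinearMap.id := by
  obtain ⟨c, d, a, h⟩ := exists_basis_apply_eq_smul_basis (Module.finBasis R M) hf
  obtain ⟨g, hgf, hfg⟩ := exists_comp_map_eq_smul_id_of_apply_eq_smul h
  obtain ⟨u, hu⟩ := (associated_det_prod_of_apply_eq_smul h).symm.trans hr
  refine ⟨(u : R) • g, ?_, ?_⟩
  · rw [smul_comp, hgf, smul_smul, mul_comm, hu]
  · rw [comp_smul, hfg, smul_smul, mul_comm, hu]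

theorem stmt17 (n : ℕ) (T : Matrix (Fin n) (Fin n) ℤ) (hT : T.det ≠ 0) :
    (∃! b : ExteriorAlgebra ℤ (Fin n → ℤ) →ₗ[ℤ] ExteriorAlgebra ℤ (Fin n → ℤ),
      b ∘ₗ (ExteriorAlgebra.map (Matrix.toLin' T)).toLinearMap =
        |T.det| • (LinearMap.id : ExteriorAlgebra ℤ (Fin n → ℤ) →ₗ[ℤ] _)) ∧
    ∀ (b : ExteriorAlgebra ℤ (Fin n → ℤ) →ₗ[ℤ] ExteriorAlgebra ℤ (Fin n → ℤ)),
      b ∘ₗ (ExteriorAlgebra.map (Matrix.toLin' T)).toLinearMap =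
        |T.det| • (LinearMap.id : ExteriorAlgebra ℤ (Fin n → ℤ) →ₗ[ℤ] _) →
      ∀ k : ℤ, 0 < k → T = k • (1 : Matrix (Fin n) (Fin n) ℤ) →
        ∀ (p : ℕ), p ≤ n → ∀ (x : Fin p → (Fin n → ℤ)),
          b (List.ofFn fun i => ExteriorAlgebra.ι ℤ (x i)).prod =
            k ^ (n - p) • (List.ofFn fun i => ExteriorAlgebra.ι ℤ (x i)).prod := by
  have : Module.Free ℤ (ExteriorAlgebra ℤ (Fin n → ℤ)) :=
    .of_basis (Pi.basisFun ℤ (Fin n)).ExteriorAlgebra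
  obtain ⟨g, hgf, hfg⟩ := LinearMap.exists_comp_exteriorAlgebra_map_eq_smul_id
    (f := Matrix.toLin' T) (Matrix.mulVec_injective_of_det_ne_zero hT) (r := |T.det|)
    (by simp [LinearMap.det_toLin'])
  refine ⟨LinearMap.existsUnique_comp_eq_smul_id hgf hfg (.of_ne_zero (abs_ne_zero.mpr hT)), ?_⟩
  rintro b hb k hk rfl p hp x
  have hdet : |(k • (1 : Matrix (Fin n) (Fin n) ℤ)).det| = k ^ n := by
    rw [Matrix.det_smul, Matrix.det_one, mul_one, Fintype.card_fin, abs_of_pos (pow_pos hk n)]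
  rw [hdet, map_smul, Matrix.toLin'_one] at hb
  rw [← ιMulti_apply]
  exact apply_ιMulti_of_comp_map_smul_id (.of_ne_zero hk.ne') hb hp x
end
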